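/- If A has a k-dimensional Wishart distribution with n degrees of freedom and covariance Σ of rank r < k, and M is p×k of rank p with rank(MΣ) = p ≤ r, then MAMᵀ and MΣMᵀ are both of full rank p (almost surely, for MAMᵀ, when p ≤ n). -/

import Mathlib

open scoped Classical
open MeasureTheory ProbabilityTheory Matrix Real Filter

noncomputable section

/-- Borel product measurable structure on matrices. -/
instance matMeas {m n : Type*} : MeasurableSpace (Matrix m n ℝ) := MeasurableSpace.pi

/-- The distribution of a vector of `k` i.i.d. standard normal random variables. -/
def stdGaussianPi (k : ℕ) : Measure (Fin k → ℝ) := Measure.pi fun _ => gaussianReal 0 1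

/-- Symmetric positive semidefinite square root of a PSD matrix (junk value `0` otherwise). -/
def psdSqrt {p : ℕ} (S : Matrix (Fin p) (Fin p) ℝ) : Matrix (Fin p) (Fin p) ℝ :=
  if h : S.PosSemidef then
    (h.1.eigenvectorUnitary : Matrix (Fin p) (Fin p) ℝ) *
      diagonal ((↑) ∘ (fun x => √x) ∘ h.1.eigenvalues) *
      (star h.1.eigenvectorUnitary : Matrix (Fin p) (Fin p) ℝ)
  else 0

/-- `S^{-1/2}`: the inverse of the symmetric square root of `S`. -/
def invSqrt {p : ℕ} (S : Matrix (Fin p) (Fin p) ℝ) : Matrix (Fin p) (Fin p) ℝ := (psdSqrt S)⁻¹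

/-- The (possibly singular) multivariate normal distribution `N_k(μ, S)`, defined as the
law of `μ + S^{1/2} x` with `x` a standard normal vector. -/
def mvNormal {k : ℕ} (μ : Fin k → ℝ) (S : Matrix (Fin k) (Fin k) ℝ) : Measure (Fin k → ℝ) :=
  (stdGaussianPi k).map (fun x => μ + (psdSqrt S).mulVec x)

/-- The (possibly singular) Wishart distribution `W_k(n, S)`, defined as the law of
`A = X Xᵀ` where the `n` columns of the `k × n` matrix `X` are i.i.d. `N_k(0, S)`. -/
def wishart {k : ℕ} (n : ℕ) (S : Matrix (Fin k) (Fin k) ℝ) :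
    Measure (Matrix (Fin k) (Fin k) ℝ) :=
  (Measure.pi fun _ : Fin n => mvNormal 0 S).map
    (fun X => Matrix.of fun i j => ∑ c, X c i * X c j)

/-- The chi-squared distribution with `n` degrees of freedom: law of the sum of squares of
`n` i.i.d. standard normals. -/
def chiSq (n : ℕ) : Measure ℝ := (stdGaussianPi n).map (fun x => ∑ i, (x i) ^ 2)

/-- The noncentral chi-squared distribution with 1 degree of freedom and
noncentrality parameter `d`: law of `x²`, `x ~ N(√d, 1)`. -/
def chiSq1NC (d : ℝ) : Measure ℝ := (gaussianReal (Real.sqrt d) 1).map (fun x => x ^ 2)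

/-!
Write `S = Q Q` with `Q = psdSqrt S` symmetric, and `B = M Q`. Then `M S Mᵀ = B Bᵀ` and
`rank B = rank (M S) = p`, which gives the first claim. For the second, `A = ∑_c x_c x_cᵀ` with
`x_c = Q z_c`, `z_c` i.i.d. standard normal, so `M A Mᵀ = Zᵀ Z` where `Z` has rows `B z_c`. Each
`B z_c` is absolutely continuous on `ℝ^p` (as `B` is onto), hence charges no proper subspace; by
Fubini, `p` such independent vectors are a.s. linearly independent, so `Z` has rank `p`.
-/

open Module Set Function

namespace Matrix

variable {m n : Type*} [Fintype m] [Fintype n]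

instance borelSpace_matMeas : BorelSpace (Matrix m n ℝ) :=
  inferInstanceAs (BorelSpace (m → n → ℝ))

theorem rank_eq_card_iff_linearIndependent_row {A : Matrix m n ℝ} :
    A.rank = Fintype.card m ↔ LinearIndependent ℝ A.row := by
  rw [rank_eq_finrank_span_row, linearIndependent_iff_card_eq_finrank_span, eq_comm, Set.finrank]

theorem isOpen_setOf_rank_eq_card : IsOpen {A : Matrix m n ℝ | A.rank = Fintype.card m} := by
  simp only [rank_eq_card_iff_linearIndependent_row]
  exact isOpen_setOfPred_linearIndependent

end Matrix

section psdSqrt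

variable {k : ℕ} {S : Matrix (Fin k) (Fin k) ℝ}

theorem transpose_psdSqrt : (psdSqrt S)ᵀ = psdSqrt S := by
  unfold psdSqrt
  split_ifs <;> simp [Matrix.transpose_mul, Matrix.mul_assoc, Matrix.star_eq_conjTranspose]

theorem psdSqrt_mul_self (hS : S.PosSemidef) : psdSqrt S * psdSqrt S = S := by
  set U : Matrix (Fin k) (Fin k) ℝ := (hS.1.eigenvectorUnitary : Matrix (Fin k) (Fin k) ℝ)
  have hU : star U * U = 1 := Unitary.coe_star_mul_self _
  have hD : Matrix.diagonal (((↑) : ℝ → ℝ) ∘ (fun x => √x) ∘ hS.1.eigenvalues) *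
      Matrix.diagonal (((↑) : ℝ → ℝ) ∘ (fun x => √x) ∘ hS.1.eigenvalues)
        = Matrix.diagonal (RCLike.ofReal ∘ hS.1.eigenvalues) := by
    rw [diagonal_mul_diagonal]
    congr 1
    funext i
    simp [Real.mul_self_sqrt (hS.eigenvalues_nonneg i)]
  conv_rhs => rw [hS.1.spectral_theorem, Unitary.conjStarAlgAut_apply]
  rw [psdSqrt, dif_pos hS]
  simp only [Matrix.mul_assoc]
  rw [← Matrix.mul_assoc (star U) U, hU, Matrix.one_mul, ← Matrix.mul_assoc _ _ (star U), hD]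

theorem mul_mul_transpose_eq_of_posSemidef {m : Type*} (hS : S.PosSemidef)
    (M : Matrix m (Fin k) ℝ) : M * S * Mᵀ = M * psdSqrt S * (M * psdSqrt S)ᵀ := by
  rw [transpose_mul, transpose_psdSqrt, ← Matrix.mul_assoc, Matrix.mul_assoc M (psdSqrt S),
    psdSqrt_mul_self hS]

theorem rank_mul_psdSqrt {m : Type*} [Fintype m] (hS : S.PosSemidef) (M : Matrix m (Fin k) ℝ) :
    (M * psdSqrt S).rank = (M * S).rank := by
  apply le_antisymm
  · rw [← rank_self_mul_transpose, ← mul_mul_transpose_eq_of_posSemidef hS]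
    exact rank_mul_le_left _ _
  · conv_lhs => rw [← psdSqrt_mul_self hS, ← Matrix.mul_assoc]
    exact rank_mul_le_left _ _

theorem rank_mul_mul_transpose_of_posSemidef {m : Type*} [Fintype m]
    (hS : S.PosSemidef) (M : Matrix m (Fin k) ℝ) :
    (M * S * Mᵀ).rank = (M * S).rank := by
  rw [mul_mul_transpose_eq_of_posSemidef hS, rank_self_mul_transpose, rank_mul_psdSqrt hS]

end psdSqrt

theorem MeasureTheory.Measure.absolutelyContinuous_pi_fin {X : Type*} [MeasurableSpace X]
    {μ ν : Measure X} [SigmaFinite μ] [SigmaFinite ν] (h : μ ≪ ν) :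
    ∀ n : ℕ, Measure.pi (fun _ : Fin n => μ) ≪ Measure.pi (fun _ : Fin n => ν)
  | 0 => by rw [Measure.pi_of_empty, Measure.pi_of_empty]
  | n + 1 => by
    have hμ := (measurePreserving_piFinSuccAbove (fun _ : Fin (n + 1) => μ) 0).symm
    have hν := (measurePreserving_piFinSuccAbove (fun _ : Fin (n + 1) => ν) 0).symm
    rw [← hμ.map_eq, ← hν.map_eq]
    exact (h.prod (absolutelyContinuous_pi_fin h n)).map (MeasurableEquiv.measurable _)

theorem measurePreserving_comp_pi_of_injective {ι κ X : Type*} [Fintype ι] [Fintype κ]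
    [MeasurableSpace X] (ν : Measure X) [IsProbabilityMeasure ν] {g : κ → ι}
    (hg : Injective g) :
    MeasurePreserving (fun x : ι → X => x ∘ g) (Measure.pi fun _ => ν)
      (Measure.pi fun _ => ν) := by
  classical
  refine ⟨by fun_prop, (Measure.pi_eq fun s hs => ?_).symm⟩
  have hpre : (fun x : ι → X => x ∘ g) ⁻¹' univ.pi s = univ.pi (extend g s fun _ => univ) := by
    ext x
    simp only [mem_preimage, mem_univ_pi, Function.comp_apply]
    refine ⟨fun h i => ?_, fun h k => by simpa [hg.extend_apply] using h (g k)⟩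
    by_cases hi : ∃ k, g k = i
    · obtain ⟨k, rfl⟩ := hi
      simpa [hg.extend_apply] using h k
    · simp [extend_apply' _ _ _ hi]
  rw [Measure.map_apply (by fun_prop) (.univ_pi hs), hpre, Measure.pi_pi,
    ← Finset.prod_subset (Finset.subset_univ (Finset.univ.image g)), Finset.prod_image hg.injOn]
  · simp [hg.extend_apply]
  · intro i _ hi
    rw [extend_apply' _ _ _ (by simpa using hi), measure_univ]

section LinearIndependence

variable {E : Type*} [NormedAddCommGroup E] [NormedSpace ℝ E] [FiniteDimensional ℝ E]
  [MeasurableSpace E] [BorelSpace E] {ν : Measure E}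

theorem ae_linearIndependent_pi [SigmaFinite ν] (hν : ∀ V : Submodule ℝ E, V ≠ ⊤ → ν V = 0) :
    ∀ {m : ℕ}, m ≤ finrank ℝ E → ∀ᵐ x ∂Measure.pi (fun _ : Fin m => ν), LinearIndependent ℝ x
  | 0, _ => .of_forall fun _ => linearIndependent_empty_type
  | m + 1, hm => by
    have hpi := (measurePreserving_piFinSuccAbove (fun _ : Fin (m + 1) => ν) 0).symm
    rw [← hpi.map_eq, MeasurableEquiv.measurableEmbedding _ |>.ae_map_iff]
    simp only [MeasurableEquiv.piFinSuccAbove_symm_apply, Fin.insertNthEquiv, Equiv.coe_fn_mk,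
      Fin.insertNth_zero']
    have hmeas : MeasurableSet
        {q : E × (Fin m → E) | LinearIndependent ℝ (Fin.cons q.1 q.2 : Fin (m + 1) → E)} :=
      isOpen_setOfPred_linearIndependent.measurableSet.preimage (by fun_prop)
    refine (Measure.ae_prod_iff_ae_ae hmeas).2 ((Measure.ae_ae_comm hmeas).2 ?_)
    filter_upwards [ae_linearIndependent_pi hν (m := m) (by omega)] with z hz
    have hproper : Submodule.span ℝ (range z) ≠ ⊤ := fun htop => by
      have := finrank_span_eq_card hz
      rw [htop, finrank_top, Fintype.card_fin] at this
      omega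
    filter_upwards [measure_eq_zero_iff_ae_notMem.1 (hν _ hproper)] with y hy
    exact linearIndependent_finCons.2 ⟨hz, hy⟩

theorem ae_span_range_eq_top_pi [IsProbabilityMeasure ν]
    (hν : ∀ V : Submodule ℝ E, V ≠ ⊤ → ν V = 0) {n : ℕ} (hn : finrank ℝ E ≤ n) :
    ∀ᵐ x ∂Measure.pi (fun _ : Fin n => ν), Submodule.span ℝ (range x) = ⊤ := by
  have hmarginal := measurePreserving_comp_pi_of_injective ν (Fin.castLE_injective hn)
  have hindep := ae_linearIndependent_pi hν le_rfl
  rw [← hmarginal.map_eq] at hindep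
  filter_upwards [ae_of_ae_map hmarginal.measurable.aemeasurable hindep] with x hx
  rw [eq_top_iff, ← hx.span_eq_top_of_card_eq_finrank' (Fintype.card_fin _)]
  exact Submodule.span_mono (range_comp_subset_range _ _)

end LinearIndependence

section Gaussian

variable {k p : ℕ}

instance : IsProbabilityMeasure (stdGaussianPi k) := by
  unfold stdGaussianPi; infer_instance

instance (μ : Fin k → ℝ) (S : Matrix (Fin k) (Fin k) ℝ) : IsProbabilityMeasure (mvNormal μ S) := by
  unfold mvNormal
  exact Measure.isProbabilityMeasure_map (by fun_prop)

theorem stdGaussianPi_absolutelyContinuous : stdGaussianPi k ≪ volume := by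
  rw [volume_pi]
  exact Measure.absolutelyContinuous_pi_fin (gaussianReal_absolutelyContinuous 0 one_ne_zero) k

theorem map_mulVec_apply_submodule_eq_zero {μ : Measure (Fin k → ℝ)} (hμ : μ ≪ volume)
    {B : Matrix (Fin p) (Fin k) ℝ} (hB : B.rank = p) {V : Submodule ℝ (Fin p → ℝ)}
    (hV : V ≠ ⊤) : μ.map B.mulVec V = 0 := by
  have hsurj : LinearMap.range B.mulVecLin = ⊤ :=
    Submodule.eq_top_of_finrank_eq (by rw [← rank, hB, finrank_fin_fun])
  rw [Measure.map_apply (by fun_prop) V.closed_of_finiteDimensional.measurableSet]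
  refine hμ (Measure.addHaar_submodule volume (V.comap B.mulVecLin) fun htop => hV ?_)
  rw [eq_top_iff, ← hsurj, LinearMap.range_le_iff_comap, htop]

theorem mvNormal_zero_map_mulVec (S : Matrix (Fin k) (Fin k) ℝ) (M : Matrix (Fin p) (Fin k) ℝ) :
    (mvNormal 0 S).map M.mulVec = (stdGaussianPi k).map (M * psdSqrt S).mulVec := by
  rw [mvNormal, Measure.map_map (by fun_prop) (by fun_prop)]
  congr 1
  funext x
  simp [Matrix.mulVec_mulVec]

variable {S : Matrix (Fin k) (Fin k) ℝ} {M : Matrix (Fin p) (Fin k) ℝ}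

theorem mvNormal_map_mulVec_apply_submodule_eq_zero (hS : S.PosSemidef)
    (hMS : (M * S).rank = p) {V : Submodule ℝ (Fin p → ℝ)} (hV : V ≠ ⊤) :
    (mvNormal 0 S).map M.mulVec V = 0 := by
  rw [mvNormal_zero_map_mulVec]
  exact map_mulVec_apply_submodule_eq_zero stdGaussianPi_absolutelyContinuous
    (by rw [rank_mul_psdSqrt hS, hMS]) hV

theorem ae_span_range_mulVec_eq_top (hS : S.PosSemidef) (hMS : (M * S).rank = p) {n : ℕ}
    (hpn : p ≤ n) :
    ∀ᵐ X ∂Measure.pi (fun _ : Fin n => mvNormal 0 S),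
      Submodule.span ℝ (range fun c => M *ᵥ X c) = ⊤ := by
  have : IsProbabilityMeasure ((mvNormal 0 S).map M.mulVec) :=
    Measure.isProbabilityMeasure_map (by fun_prop)
  have hspan := ae_span_range_eq_top_pi (n := n)
    (fun _ hV => mvNormal_map_mulVec_apply_submodule_eq_zero hS hMS hV) (by simpa using hpn)
  rw [← Measure.pi_map_pi fun _ => by fun_prop] at hspan
  exact ae_of_ae_map (Measurable.aemeasurable (by fun_prop)) hspan

end Gaussian

theorem measurableSet_setOf_rank_mul_mul_transpose_eq {k p : ℕ} (M : Matrix (Fin p) (Fin k) ℝ) :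
    MeasurableSet {A : Matrix (Fin k) (Fin k) ℝ | (M * A * Mᵀ).rank = p} := by
  have hcont : Continuous fun A : Matrix (Fin k) (Fin k) ℝ => M * A * Mᵀ := by fun_prop
  simpa using (Matrix.isOpen_setOf_rank_eq_card.preimage hcont).measurableSet

theorem rank_mul_gram_mul_transpose {k n p : ℕ} (M : Matrix (Fin p) (Fin k) ℝ)
    (X : Fin n → Fin k → ℝ) :
    (M * (of fun i j => ∑ c, X c i * X c j) * Mᵀ).rank
      = finrank ℝ (Submodule.span ℝ (range fun c => M *ᵥ X c)) := by
  have hgram : M * (of fun i j => ∑ c, X c i * X c j) * Mᵀ = (of X * Mᵀ)ᵀ * (of X * Mᵀ) := by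
    change M * ((of X)ᵀ * of X) * Mᵀ = _
    simp only [transpose_mul, transpose_transpose, Matrix.mul_assoc]
  have hrow : (of X * Mᵀ).row = fun c => M *ᵥ X c := by
    ext c a
    simp [Matrix.mul_apply, mulVec, dotProduct, mul_comm]
  rw [hgram, rank_transpose_mul_self, rank_eq_finrank_span_row, hrow]

theorem stmt1_general {k p n : ℕ} (S : Matrix (Fin k) (Fin k) ℝ) (hS : S.PosSemidef)
    (M : Matrix (Fin p) (Fin k) ℝ) (hMS : (M * S).rank = p)
    (hpn : p ≤ n) :
    (M * S * Mᵀ).rank = p ∧ ∀ᵐ A ∂(wishart n S), (M * A * Mᵀ).rank = p := by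
  refine ⟨by rw [rank_mul_mul_transpose_of_posSemidef hS, hMS], ?_⟩
  rw [wishart, ae_map_iff (Measurable.aemeasurable (by fun_prop))
    (measurableSet_setOf_rank_mul_mul_transpose_eq M)]
  filter_upwards [ae_span_range_mulVec_eq_top hS hMS hpn] with X hX
  rw [rank_mul_gram_mul_transpose M X, hX, finrank_top, finrank_fin_fun]

theorem stmt1 {k p n r : ℕ} (S : Matrix (Fin k) (Fin k) ℝ) (hS : S.PosSemidef)
    (hrank : S.rank = r) (hrk : r < k)
    (M : Matrix (Fin p) (Fin k) ℝ) (hM : M.rank = p) (hMS : (M * S).rank = p)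
    (hpr : p ≤ r) (hpn : p ≤ n) :
    (M * S * Mᵀ).rank = p ∧ ∀ᵐ A ∂(wishart n S), (M * A * Mᵀ).rank = p :=
  stmt1_general S hS M hMS hpn
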